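/- Parallelogram lemma: let m₁, m̄₁, m₂, m̄₂ ∈ ℝ² satisfy |m₁| = |m̄₁| = |m₂| = |m̄₂| and m₁ − m̄₁ + m₂ − m̄₂ = 0. Then at least one of the following holds: (i) m₁ = m̄₁ and m₂ = m̄₂; (ii) m₁ = −m₂ and m̄₁ = −m̄₂; (iii) m₁ = m̄₂ and m₂ = m̄₁. -/

import Mathlib

/-! Put `w = m₁ - m̄₁ = m̄₂ - m₂`. If `w = 0` we are in case (i). Otherwise `m̄₁` and `m₂` are the
initial points of two chords of the same circle with the same vector `w`. Either the chords
coincide, which is case (iii), or `m̄₁ - m₂` is orthogonal both to `w` and to `m̄₁ + m₂`; in the plane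
this forces `m̄₁ + m₂` to be parallel to `w`, and then `m̄₁ + m₂ = -w`, which is case (ii). -/

open Module Submodule RealInnerProductSpace

section Chords

variable {E : Type*} [NormedAddCommGroup E] [InnerProductSpace ℝ E]

theorem two_mul_inner_add_norm_sq_eq_zero_of_norm_add_eq {x w : E} (h : ‖x + w‖ = ‖x‖) :
    2 * ⟪x, w⟫ + ‖w‖ ^ 2 = 0 := by
  have := norm_add_sq_real x w
  rw [h] at this
  linarith

theorem eq_or_add_eq_neg_of_norm_add_eq_of_norm_add_eq [Fact (finrank ℝ E = 2)] {x y w : E}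
    (hw : w ≠ 0) (hx : ‖x + w‖ = ‖x‖) (hy : ‖y + w‖ = ‖y‖) (hxy : ‖x‖ = ‖y‖) :
    x = y ∨ x + y = -w := by
  refine or_iff_not_imp_left.mpr fun hne => ?_
  have hx' := two_mul_inner_add_norm_sq_eq_zero_of_norm_add_eq hx
  have hy' := two_mul_inner_add_norm_sq_eq_zero_of_norm_add_eq hy
  have hd : x - y ≠ 0 := sub_ne_zero.mpr hne
  have hdw : ⟪x - y, w⟫ = 0 := by rw [inner_sub_left]; linarith
  have hds : ⟪x - y, x + y⟫ = 0 := by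
    rw [real_inner_comm]; exact (real_inner_add_sub_eq_zero_iff x y).mpr hxy
  obtain ⟨c, hc⟩ := mem_span_singleton.mp
    (mem_span_singleton_of_inner_eq_zero_of_inner_eq_zero hd hw hds hdw)
  have hsw : ⟪x + y, w⟫ = -‖w‖ ^ 2 := by rw [inner_add_left]; linarith
  have hc1 : c = -1 := by
    rw [← hc, real_inner_smul_left, real_inner_self_eq_norm_sq] at hsw
    have : ‖w‖ ^ 2 ≠ 0 := by positivity
    exact mul_right_cancel₀ this (by linarith)
  rw [← hc, hc1, neg_one_smul]

end Chords

theorem parallelogram_lemma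
    (m₁ mb₁ m₂ mb₂ : EuclideanSpace ℝ (Fin 2))
    (h₁ : ‖m₁‖ = ‖mb₁‖) (h₂ : ‖mb₁‖ = ‖m₂‖) (h₃ : ‖m₂‖ = ‖mb₂‖)
    (hsum : m₁ - mb₁ + m₂ - mb₂ = 0) :
    (m₁ = mb₁ ∧ m₂ = mb₂) ∨ (m₁ = -m₂ ∧ mb₁ = -mb₂) ∨ (m₁ = mb₂ ∧ m₂ = mb₁) := by
  have hmb₂ : mb₂ = m₂ + (m₁ - mb₁) := by linear_combination (norm := module) -hsum
  by_cases hw : m₁ - mb₁ = 0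
  · rw [hw, add_zero] at hmb₂
    exact Or.inl ⟨sub_eq_zero.mp hw, hmb₂.symm⟩
  have : Fact (finrank ℝ (EuclideanSpace ℝ (Fin 2)) = 2) := ⟨finrank_euclideanSpace_fin⟩
  rcases eq_or_add_eq_neg_of_norm_add_eq_of_norm_add_eq hw
      (by rwa [add_sub_cancel]) (by rw [← hmb₂, h₃]) h₂ with hchord | hrect
  · right; right
    subst hchord
    exact ⟨by rw [hmb₂]; abel, rfl⟩
  · right; left
    have hm₁ : m₁ = -m₂ := by linear_combination (norm := module) hrect
    refine ⟨hm₁, ?_⟩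
    linear_combination (norm := module) hmb₂ + hm₁
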